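/- Let X be a topological space and let F be a precosheaf of vector spaces on X that decomposes as a direct sum F = ⊕_{m≥0} F^{(m)}, where each F^{(m)} is 'pulled back' from a cosheaf G^{(m)} on X^m via U ↦ G^{(m)}(U^m), and the structure maps preserve the decomposition. If {U_i} is a Weiss cover of U ⊆ X, then F(U) is the colimit (coequalizer) of the diagram ⊕_{i,j} F(U_i ∩ U_j) ⇉ ⊕_i F(U_i). That is, F satisfies codescent for Weiss covers. -/
import Mathlib


section

variable {X : Type} [TopologicalSpace X]
  (G : (m : ℕ) → Set (Fin m → X) → Type)
  [∀ m s, AddCommGroup (G m s)] [∀ m s, Module ℝ (G m s)]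

/-- The `m`-th power `U^m ⊆ X^m` of a subset `U ⊆ X`, with `X^m` realized as `Fin m → X`. -/
def powSet (m : ℕ) (U : Set X) : Set (Fin m → X) := {f | ∀ k, f k ∈ U}

theorem powSet_mono {U V : Set X} (h : U ⊆ V) (m : ℕ) : powSet m U ⊆ powSet m V :=
  fun _f hf k => h (hf k)

variable (ext : ∀ (m : ℕ) {s t : Set (Fin m → X)}, s ⊆ t → (G m s →ₗ[ℝ] G m t))

/-- The precosheaf `F = ⊕_m F^{(m)}`, where `F^{(m)}(U) = G m (U^m)` is pulled back from
the precosheaf `G m` on `X^m`. -/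
abbrev FF (U : Set X) : Type := DirectSum ℕ (fun m => G m (powSet m U))

/-- The structure (extension) map of `F`, acting componentwise. -/
noncomputable def FFmap {U V : Set X} (h : U ⊆ V) : FF G U →ₗ[ℝ] FF G V :=
  DirectSum.toModule ℝ ℕ (FF G V)
    (fun m => (DirectSum.lof ℝ ℕ (fun m => G m (powSet m V)) m).comp
      (ext m (powSet_mono h m)))


theorem isOpen_powSet {U : Set X} (hU : IsOpen U) (m : ℕ) : IsOpen (powSet m U) := by
  have h : powSet m U = Set.pi Set.univ (fun _ : Fin m => U) := by
    ext f; simp [powSet, Set.mem_pi]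
  rw [h]
  exact isOpen_set_pi Set.finite_univ (fun _ _ => hU)

theorem powSet_inter (m : ℕ) (A B : Set X) :
    powSet m A ∩ powSet m B ⊆ powSet m (A ∩ B) :=
  fun _f hf k => ⟨hf.1 k, hf.2 k⟩

/-- Inclusion of the `m`-th layer into the direct sum of the `FF`'s. -/
noncomputable def iotaMap {I : Type} [DecidableEq I] (A : I → Set X) (m : ℕ) :
    DirectSum I (fun i => G m (powSet m (A i))) →ₗ[ℝ] DirectSum I (fun i => FF G (A i)) :=
  DirectSum.toModule ℝ I _ fun i =>
    (DirectSum.lof ℝ I (fun i => FF G (A i)) i).comp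
      (DirectSum.lof ℝ ℕ (fun m => G m (powSet m (A i))) m)

/-- Projection onto the `m`-th layer. -/
noncomputable def projMap {I : Type} [DecidableEq I] (A : I → Set X) (m : ℕ) :
    DirectSum I (fun i => FF G (A i)) →ₗ[ℝ] DirectSum I (fun i => G m (powSet m (A i))) :=
  DirectSum.toModule ℝ I _ fun i =>
    (DirectSum.lof ℝ I (fun i => G m (powSet m (A i))) i).comp
      (DirectSum.component ℝ ℕ (fun m => G m (powSet m (A i))) m)

/-- Inclusion of the `m`-th layer, pairwise-intersection version. -/
noncomputable def iotaPair {I : Type} [DecidableEq I] (Ui : I → Set X) (m : ℕ) :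
    DirectSum (I × I) (fun p => G m (powSet m (Ui p.1) ∩ powSet m (Ui p.2))) →ₗ[ℝ]
      DirectSum (I × I) (fun p => FF G (Ui p.1 ∩ Ui p.2)) :=
  DirectSum.toModule ℝ (I × I) _ fun p =>
    (DirectSum.lof ℝ (I × I) (fun p => FF G (Ui p.1 ∩ Ui p.2)) p).comp
      ((DirectSum.lof ℝ ℕ (fun m => G m (powSet m (Ui p.1 ∩ Ui p.2))) m).comp
        (ext m (powSet_inter m (Ui p.1) (Ui p.2))))

theorem projMap_lof {I : Type} [DecidableEq I] (A : I → Set X) (m : ℕ) (i : I)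
    (a : FF G (A i)) :
    projMap G A m (DirectSum.lof ℝ I (fun i => FF G (A i)) i a) =
      DirectSum.lof ℝ I (fun i => G m (powSet m (A i))) i
        (DirectSum.component ℝ ℕ (fun m => G m (powSet m (A i))) m a) := by
  rw [projMap]; exact DirectSum.toModule_lof (M := fun i => FF G (A i)) ℝ i a

theorem iotaMap_lof {I : Type} [DecidableEq I] (A : I → Set X) (m : ℕ) (i : I)
    (g : G m (powSet m (A i))) :
    iotaMap G A m (DirectSum.lof ℝ I (fun i => G m (powSet m (A i))) i g) =
      DirectSum.lof ℝ I (fun i => FF G (A i)) i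
        (DirectSum.lof ℝ ℕ (fun m => G m (powSet m (A i))) m g) := by
  rw [iotaMap]; exact DirectSum.toModule_lof (M := fun i => G m (powSet m (A i))) ℝ i g

theorem iotaPair_lof {I : Type} [DecidableEq I] (Ui : I → Set X) (m : ℕ) (p : I × I)
    (g : G m (powSet m (Ui p.1) ∩ powSet m (Ui p.2))) :
    iotaPair G ext Ui m
        (DirectSum.lof ℝ (I × I) (fun p => G m (powSet m (Ui p.1) ∩ powSet m (Ui p.2))) p g) =
      DirectSum.lof ℝ (I × I) (fun p => FF G (Ui p.1 ∩ Ui p.2)) p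
        (DirectSum.lof ℝ ℕ (fun m => G m (powSet m (Ui p.1 ∩ Ui p.2))) m
          (ext m (powSet_inter m (Ui p.1) (Ui p.2)) g)) := by
  rw [iotaPair]
  exact DirectSum.toModule_lof
    (M := fun p => G m (powSet m (Ui p.1) ∩ powSet m (Ui p.2)))
    (N := DirectSum (I × I) (fun p => FF G (Ui p.1 ∩ Ui p.2))) ℝ p g

/-- Every element of `⊕ i, FF (A i)` is a finite sum of its layers. -/
theorem exists_decomp {I : Type} [DecidableEq I] (A : I → Set X)
    (x : DirectSum I (fun i => FF G (A i))) :
    ∃ S : Finset ℕ, (∀ m ∉ S, projMap G A m x = 0) ∧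
      (∑ m ∈ S, iotaMap G A m (projMap G A m x)) = x := by
  classical
  induction x using DirectSum.induction_on with
  | zero => exact ⟨∅, fun m _ => map_zero _, by simp⟩
  | of i a =>
    refine ⟨DFinsupp.support a, ?_, ?_⟩
    · intro m hm
      rw [← DirectSum.lof_eq_of ℝ, projMap_lof]
      have h0 : DirectSum.component ℝ ℕ (fun m => G m (powSet m (A i))) m a = 0 := by
        rw [← DirectSum.apply_eq_component]
        exact DFinsupp.notMem_support_iff.mp hm
      rw [h0, map_zero]
    · rw [← DirectSum.lof_eq_of ℝ]
      have h1 : ∀ m ∈ DFinsupp.support a,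
          iotaMap G A m (projMap G A m (DirectSum.lof ℝ I (fun i => FF G (A i)) i a)) =
            DirectSum.lof ℝ I (fun i => FF G (A i)) i
              (DirectSum.of (fun m => G m (powSet m (A i))) m (a m)) := by
        intro m _
        rw [projMap_lof, iotaMap_lof, DirectSum.lof_eq_of ℝ]
        rfl
      rw [Finset.sum_congr rfl h1, ← map_sum, DirectSum.sum_support_of]
  | add x y hx hy =>
    obtain ⟨Sx, hx0, hx1⟩ := hx
    obtain ⟨Sy, hy0, hy1⟩ := hy
    refine ⟨Sx ∪ Sy, ?_, ?_⟩
    · intro m hm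
      simp only [Finset.mem_union] at hm
      push_neg at hm
      rw [map_add, hx0 m hm.1, hy0 m hm.2, add_zero]
    · have ex : (∑ m ∈ Sx ∪ Sy, iotaMap G A m (projMap G A m x)) = x := by
        refine .trans (.symm (Finset.sum_subset Finset.subset_union_left ?_)) hx1
        intro m _ hm
        rw [hx0 m hm, map_zero]
      have ey : (∑ m ∈ Sx ∪ Sy, iotaMap G A m (projMap G A m y)) = y := by
        refine .trans (.symm (Finset.sum_subset Finset.subset_union_right ?_)) hy1
        intro m _ hm
        rw [hy0 m hm, map_zero]
      simp only [map_add, Finset.sum_add_distrib, ex, ey]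

/-- **Weiss codescent from ordinary codescent on powers.**
Let `F = ⊕_m F^{(m)}` be a precosheaf of real vector spaces on `X` whose summands
`F^{(m)}(U) = G^{(m)}(U^m)` are pulled back from cosheaves `G^{(m)}` on `X^m` (i.e. each
`G^{(m)}` satisfies the coequalizer condition for ordinary open covers), with structure
maps preserving the decomposition.  Then for every Weiss cover `{U i}` of an open `U ⊆ X`,
`F(U)` is the coequalizer of `⊕_{i,j} F(U_i ∩ U_j) ⇉ ⊕_i F(U_i)`: the canonical map
`⊕_i F(U_i) → F(U)` is surjective and its kernel is the range of the difference map. -/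
theorem weiss_codescent_of_powers
    (hext_id : ∀ (m : ℕ) (s : Set (Fin m → X)),
      ext m (Set.Subset.refl s) = LinearMap.id)
    (hext_comp : ∀ (m : ℕ) {s t u : Set (Fin m → X)} (hst : s ⊆ t) (htu : t ⊆ u),
      ext m (hst.trans htu) = (ext m htu).comp (ext m hst))
    (hcosheaf : ∀ (m : ℕ) (J : Type) [DecidableEq J]
      (W : Set (Fin m → X)) (Vj : J → Set (Fin m → X)),
      IsOpen W → (∀ j, IsOpen (Vj j)) →
      ∀ (hVW : ∀ j, Vj j ⊆ W), (⋃ j, Vj j) = W →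
      (Function.Surjective
        (DirectSum.toModule ℝ J (G m W) (fun j => ext m (hVW j))) ∧
      LinearMap.ker
        (DirectSum.toModule ℝ J (G m W) (fun j => ext m (hVW j))) =
      LinearMap.range
        (DirectSum.toModule ℝ (J × J) (DirectSum J (fun j => G m (Vj j)))
          (fun p =>
            (DirectSum.lof ℝ J (fun j => G m (Vj j)) p.1).comp
              (ext m (Set.inter_subset_left : Vj p.1 ∩ Vj p.2 ⊆ Vj p.1)) -
            (DirectSum.lof ℝ J (fun j => G m (Vj j)) p.2).comp
              (ext m (Set.inter_subset_right : Vj p.1 ∩ Vj p.2 ⊆ Vj p.2))))))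
    {I : Type} [DecidableEq I] (U : Set X) (Ui : I → Set X)
    (hU : IsOpen U) (hUi : ∀ i, IsOpen (Ui i)) (hsub : ∀ i, Ui i ⊆ U)
    (hweiss : ∀ S : Set X, S.Finite → S ⊆ U → ∃ i, S ⊆ Ui i) :
    Function.Surjective
      (DirectSum.toModule ℝ I (FF G U) (fun i => FFmap G ext (hsub i))) ∧
    LinearMap.ker
      (DirectSum.toModule ℝ I (FF G U) (fun i => FFmap G ext (hsub i))) =
    LinearMap.range
      (DirectSum.toModule ℝ (I × I) (DirectSum I (fun i => FF G (Ui i)))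
        (fun p =>
          (DirectSum.lof ℝ I (fun i => FF G (Ui i)) p.1).comp
            (FFmap G ext (Set.inter_subset_left : Ui p.1 ∩ Ui p.2 ⊆ Ui p.1)) -
          (DirectSum.lof ℝ I (fun i => FF G (Ui i)) p.2).comp
            (FFmap G ext (Set.inter_subset_right : Ui p.1 ∩ Ui p.2 ⊆ Ui p.2)))) := by
  classical
  have hUnion : ∀ m : ℕ, (⋃ i, powSet m (Ui i)) = powSet m U := by
    intro m
    apply Set.Subset.antisymm
    · exact Set.iUnion_subset fun i => powSet_mono (hsub i) m
    · intro f hf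
      obtain ⟨i, hi⟩ := hweiss (Set.range f) (Set.finite_range f)
        (by rintro _ ⟨k, rfl⟩; exact hf k)
      exact Set.mem_iUnion.2 ⟨i, fun k => hi ⟨k, rfl⟩⟩
  have hc := fun m : ℕ => hcosheaf m I (powSet m U) (fun i => powSet m (Ui i))
      (isOpen_powSet hU m) (fun i => isOpen_powSet (hUi i) m)
      (fun i => powSet_mono (hsub i) m) (hUnion m)
  -- composing two extension maps
  have hcomp' : ∀ (m : ℕ) {s t u : Set (Fin m → X)} (hst : s ⊆ t) (htu : t ⊆ u)
      (hsu : s ⊆ u) (g : G m s), ext m htu (ext m hst g) = ext m hsu g := by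
    intro m s t u hst htu hsu g
    rw [show ext m hsu = (ext m htu).comp (ext m hst) from hext_comp m hst htu]
    rfl
  -- commutation of the big canonical map with the layer projections
  have hcomm1 : ∀ m : ℕ,
      (DirectSum.component ℝ ℕ (fun m => G m (powSet m U)) m).comp
        (DirectSum.toModule ℝ I (FF G U) (fun i => FFmap G ext (hsub i))) =
      (DirectSum.toModule ℝ I (G m (powSet m U))
          (fun i => ext m (powSet_mono (hsub i) m))).comp (projMap G Ui m) := by
    intro m
    refine DirectSum.linearMap_ext ℝ fun i => ?_
    refine DirectSum.linearMap_ext ℝ fun m' => ?_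
    ext g
    simp only [LinearMap.comp_apply, DirectSum.toModule_lof, projMap_lof, FFmap]
    by_cases h : m' = m
    · subst h
      simp [DirectSum.component.lof_self, DirectSum.toModule_lof]
    · simp [DirectSum.component.of, h]
  -- commutation of the big canonical map with the layer inclusions
  have hcomm2 : ∀ m : ℕ,
      (DirectSum.toModule ℝ I (FF G U) (fun i => FFmap G ext (hsub i))).comp
        (iotaMap G Ui m) =
      (DirectSum.lof ℝ ℕ (fun m => G m (powSet m U)) m).comp
        (DirectSum.toModule ℝ I (G m (powSet m U))
          (fun i => ext m (powSet_mono (hsub i) m))) := by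
    intro m
    refine DirectSum.linearMap_ext ℝ fun i => ?_
    ext g
    simp only [LinearMap.comp_apply, iotaMap_lof, DirectSum.toModule_lof, FFmap]
  -- commutation of the difference map with the layer inclusions
  have hcomm3 : ∀ m : ℕ,
      (DirectSum.toModule ℝ (I × I) (DirectSum I (fun i => FF G (Ui i)))
        (fun p =>
          (DirectSum.lof ℝ I (fun i => FF G (Ui i)) p.1).comp
            (FFmap G ext (Set.inter_subset_left : Ui p.1 ∩ Ui p.2 ⊆ Ui p.1)) -
          (DirectSum.lof ℝ I (fun i => FF G (Ui i)) p.2).comp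
            (FFmap G ext (Set.inter_subset_right : Ui p.1 ∩ Ui p.2 ⊆ Ui p.2)))).comp
        (iotaPair G ext Ui m) =
      (iotaMap G Ui m).comp
        (DirectSum.toModule ℝ (I × I) (DirectSum I (fun i => G m (powSet m (Ui i))))
          (fun p =>
            (DirectSum.lof ℝ I (fun i => G m (powSet m (Ui i))) p.1).comp
              (ext m (Set.inter_subset_left :
                powSet m (Ui p.1) ∩ powSet m (Ui p.2) ⊆ powSet m (Ui p.1))) -
            (DirectSum.lof ℝ I (fun i => G m (powSet m (Ui i))) p.2).comp
              (ext m (Set.inter_subset_right :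
                powSet m (Ui p.1) ∩ powSet m (Ui p.2) ⊆ powSet m (Ui p.2))))) := by
    intro m
    refine DirectSum.linearMap_ext ℝ fun p => ?_
    ext g
    simp only [LinearMap.comp_apply, iotaPair_lof, DirectSum.toModule_lof,
      LinearMap.sub_apply, map_sub, FFmap, iotaMap_lof]
    rw [hcomp' m (powSet_inter m (Ui p.1) (Ui p.2))
        (powSet_mono Set.inter_subset_left m) Set.inter_subset_left g,
      hcomp' m (powSet_inter m (Ui p.1) (Ui p.2))
        (powSet_mono Set.inter_subset_right m) Set.inter_subset_right g]
  constructor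
  · -- surjectivity
    intro x
    choose z hz using fun m =>
      (hc m).1 (DirectSum.component ℝ ℕ (fun m => G m (powSet m U)) m x)
    refine ⟨∑ m ∈ DFinsupp.support x, iotaMap G Ui m (z m), ?_⟩
    rw [map_sum]
    have h1 : ∀ m ∈ DFinsupp.support x,
        DirectSum.toModule ℝ I (FF G U) (fun i => FFmap G ext (hsub i))
            (iotaMap G Ui m (z m)) =
          DirectSum.of (fun m => G m (powSet m U)) m (x m) := by
      intro m _
      have h := congrArg (fun f => f (z m)) (hcomm2 m)
      simp only [LinearMap.comp_apply] at h
      rw [h, hz m]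
      rfl
    rw [Finset.sum_congr rfl h1, DirectSum.sum_support_of]
  · apply le_antisymm
    · -- kernel ⊆ range
      intro x hx
      rw [LinearMap.mem_ker] at hx
      obtain ⟨S, hS0, hS1⟩ := exists_decomp G Ui x
      have hker : ∀ m : ℕ, DirectSum.toModule ℝ I (G m (powSet m U))
          (fun i => ext m (powSet_mono (hsub i) m)) (projMap G Ui m x) = 0 := by
        intro m
        have h := congrArg (fun f => f x) (hcomm1 m)
        simp only [LinearMap.comp_apply] at h
        rw [← h, hx, map_zero]
      have hex : ∀ m : ℕ, ∃ y,
          (DirectSum.toModule ℝ (I × I) (DirectSum I (fun i => G m (powSet m (Ui i))))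
            (fun p =>
              (DirectSum.lof ℝ I (fun i => G m (powSet m (Ui i))) p.1).comp
                (ext m (Set.inter_subset_left :
                  powSet m (Ui p.1) ∩ powSet m (Ui p.2) ⊆ powSet m (Ui p.1))) -
              (DirectSum.lof ℝ I (fun i => G m (powSet m (Ui i))) p.2).comp
                (ext m (Set.inter_subset_right :
                  powSet m (Ui p.1) ∩ powSet m (Ui p.2) ⊆ powSet m (Ui p.2))))) y =
            projMap G Ui m x := by
        intro m
        have hmem := LinearMap.mem_ker.mpr (hker m)
        rw [(hc m).2] at hmem
        exact hmem
      choose y hy using hex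
      refine ⟨∑ m ∈ S, iotaPair G ext Ui m (y m), ?_⟩
      rw [map_sum]
      have h2 : ∀ m ∈ S,
          (DirectSum.toModule ℝ (I × I) (DirectSum I (fun i => FF G (Ui i)))
            (fun p =>
              (DirectSum.lof ℝ I (fun i => FF G (Ui i)) p.1).comp
                (FFmap G ext (Set.inter_subset_left : Ui p.1 ∩ Ui p.2 ⊆ Ui p.1)) -
              (DirectSum.lof ℝ I (fun i => FF G (Ui i)) p.2).comp
                (FFmap G ext (Set.inter_subset_right : Ui p.1 ∩ Ui p.2 ⊆ Ui p.2))))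
            (iotaPair G ext Ui m (y m)) =
          iotaMap G Ui m (projMap G Ui m x) := by
        intro m _
        have h := congrArg (fun f => f (y m)) (hcomm3 m)
        simp only [LinearMap.comp_apply] at h
        rw [h, hy m]
      rw [Finset.sum_congr rfl h2, hS1]
    · -- range ⊆ kernel
      rintro _ ⟨v, rfl⟩
      rw [LinearMap.mem_ker]
      have hzero :
          (DirectSum.toModule ℝ I (FF G U) (fun i => FFmap G ext (hsub i))).comp
            (DirectSum.toModule ℝ (I × I) (DirectSum I (fun i => FF G (Ui i)))
              (fun p =>
                (DirectSum.lof ℝ I (fun i => FF G (Ui i)) p.1).comp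
                  (FFmap G ext (Set.inter_subset_left : Ui p.1 ∩ Ui p.2 ⊆ Ui p.1)) -
                (DirectSum.lof ℝ I (fun i => FF G (Ui i)) p.2).comp
                  (FFmap G ext (Set.inter_subset_right : Ui p.1 ∩ Ui p.2 ⊆ Ui p.2)))) = 0 := by
        refine DirectSum.linearMap_ext ℝ fun p => ?_
        refine DirectSum.linearMap_ext ℝ fun m => ?_
        ext g
        simp only [LinearMap.comp_apply, DirectSum.toModule_lof, LinearMap.sub_apply,
          map_sub, FFmap, LinearMap.zero_apply]
        rw [hcomp' m (powSet_mono Set.inter_subset_left m)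
            (powSet_mono (hsub p.1) m) (powSet_mono (fun _ h => hsub p.1 h.1) m) g,
          hcomp' m (powSet_mono Set.inter_subset_right m)
            (powSet_mono (hsub p.2) m) (powSet_mono (fun _ h => hsub p.1 h.1) m) g,
          sub_self]
      have h := congrArg (fun f => f v) hzero
      simpa using h


end
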